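/- For all natural numbers a, c, k with a ≤ c−1, the following identity holds in ℚ(q): Σ_{j=0}^{a} q^(−(c+1)j + k(a+1))·qbinom(a,j)·qbinom(c−1−a, k−j) + q^(−c+1+2a)·Σ_{j=0}^{a} q^(−(c+1)j + (k−1)(a+1))·qbinom(a,j)·qbinom(c−1−a, k−1−j) = qbinom(c, k). -/

import Mathlib

open scoped BigOperators

/-- The generator `q` of the field of rational functions `ℚ(q)`. -/
noncomputable def q : RatFunc ℚ := RatFunc.X

/-- The balanced quantum integer `[a] = (q^a - q^(-a))/(q - q⁻¹)`. -/
noncomputable def qint (a : ℤ) : RatFunc ℚ := (q ^ a - q ^ (-a)) / (q - q⁻¹)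

/-- The quantum factorial `[k]! = [1][2]⋯[k]`. -/
noncomputable def qfact (k : ℕ) : RatFunc ℚ := ∏ i ∈ Finset.range k, qint ((i : ℤ) + 1)

/-- The balanced quantum binomial `qbinom a b = [a][a-1]⋯[a-b+1]/[b]!` for `b ≥ 0`,
and `0` for `b < 0`. -/
noncomputable def qbinom (a b : ℤ) : RatFunc ℚ :=
  if b < 0 then 0
  else (∏ i ∈ Finset.range b.toNat, qint (a - (i : ℤ))) / qfact b.toNat

/-!
The left-hand side is the balanced q-Vandermonde sum
`∑ⱼ q^(-cj + k(a+1)) [a+1, j] [c-1-a, k-j] = [c, k]` in which every `[a+1, j]` has been split by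
the q-Pascal rule `[a+1, j] = q^(-j) [a, j] + q^(a+1-j) [a, j-1]`. The q-Vandermonde identity
itself follows from the same Pascal rule by induction on the second parameter, and the Pascal
rule from `[x + y] = q^(-y) [x] + q^x [y]`.
-/

lemma q_ne_zero : q ≠ 0 := RatFunc.X_ne_zero

lemma q_pow_ne_one {n : ℕ} (hn : n ≠ 0) : q ^ n ≠ 1 := by
  intro h
  have hX : (Polynomial.X : Polynomial ℚ) ^ n = 1 :=
    RatFunc.algebraMap_injective ℚ (by simpa [q, RatFunc.algebraMap_X] using h)
  simpa [hn] using congrArg Polynomial.natDegree hX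

lemma q_zpow_ne_one {m : ℤ} (hm : m ≠ 0) : q ^ m ≠ 1 := by
  have hn : m.natAbs ≠ 0 := Int.natAbs_ne_zero.mpr hm
  rcases Int.natAbs_eq m with h | h <;> rw [h]
  · simpa only [zpow_natCast] using q_pow_ne_one hn
  · rw [zpow_neg, zpow_natCast, ne_eq, inv_eq_one]
    exact q_pow_ne_one hn

lemma q_zpow_sub_q_zpow_neg_ne_zero {a : ℤ} (ha : a ≠ 0) : q ^ a - q ^ (-a) ≠ 0 := by
  intro h
  apply q_zpow_ne_one (show 2 * a ≠ 0 by omega)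
  rw [two_mul, zpow_add₀ q_ne_zero]
  nth_rewrite 2 [sub_eq_zero.mp h]
  rw [← zpow_add₀ q_ne_zero, add_neg_cancel, zpow_zero]

lemma q_sub_q_inv_ne_zero : q - q⁻¹ ≠ 0 := by
  simpa using q_zpow_sub_q_zpow_neg_ne_zero one_ne_zero

lemma qint_zero : qint 0 = 0 := by simp [qint]

lemma qint_ne_zero {a : ℤ} (ha : a ≠ 0) : qint a ≠ 0 :=
  div_ne_zero (q_zpow_sub_q_zpow_neg_ne_zero ha) q_sub_q_inv_ne_zero

lemma qint_add (x y : ℤ) : qint (x + y) = q ^ (-y) * qint x + q ^ x * qint y := by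
  simp only [qint, mul_div_assoc', ← add_div, mul_sub, ← zpow_add₀ q_ne_zero]
  ring_nf

lemma qfact_succ (k : ℕ) : qfact (k + 1) = qfact k * qint ((k : ℤ) + 1) :=
  Finset.prod_range_succ _ k

lemma qfact_ne_zero (k : ℕ) : qfact k ≠ 0 :=
  Finset.prod_ne_zero_iff.mpr fun i _ ↦ qint_ne_zero (by positivity)

lemma qbinom_of_neg (a : ℤ) {b : ℤ} (hb : b < 0) : qbinom a b = 0 := if_pos hb

lemma qbinom_natCast (a : ℤ) (k : ℕ) :
    qbinom a k = (∏ i ∈ Finset.range k, qint (a - (i : ℤ))) / qfact k := by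
  simp [qbinom]

lemma qbinom_zero_right (a : ℤ) : qbinom a 0 = 1 := by
  simpa [qfact] using qbinom_natCast a 0

lemma qbinom_succ_right (a : ℤ) (k : ℕ) :
    qbinom a ((k : ℤ) + 1) = qbinom a k * qint (a - k) / qint ((k : ℤ) + 1) := by
  rw [← Nat.cast_succ, qbinom_natCast, qbinom_natCast, Finset.prod_range_succ, qfact_succ,
    Nat.cast_succ]
  ring

lemma qbinom_natCast_of_lt {m : ℕ} {b : ℤ} (h : (m : ℤ) < b) : qbinom m b = 0 := by
  obtain ⟨b, rfl⟩ : ∃ k : ℕ, b = k := ⟨b.toNat, by omega⟩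
  have hm : m ∈ Finset.range b := Finset.mem_range.mpr (by omega)
  rw [qbinom_natCast, Finset.prod_eq_zero hm (by simp [qint_zero]), zero_div]

lemma qbinom_add_one_add_one (a : ℤ) (k : ℕ) :
    qbinom (a + 1) ((k : ℤ) + 1) = qint (a + 1) / qint ((k : ℤ) + 1) * qbinom a k := by
  rw [← Nat.cast_succ, qbinom_natCast, qbinom_natCast, Finset.prod_range_succ', qfact_succ]
  push_cast
  ring_nf

lemma qbinom_add_one_left (a b : ℤ) :
    qbinom (a + 1) b = q ^ (-b) * qbinom a b + q ^ (a + 1 - b) * qbinom a (b - 1) := by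
  rcases lt_trichotomy b 0 with hb | rfl | hb
  · simp [qbinom_of_neg _ hb, qbinom_of_neg _ (show b - 1 < 0 by omega)]
  · simp [qbinom_zero_right, qbinom_of_neg]
  · obtain ⟨k, rfl⟩ : ∃ k : ℕ, b = (k : ℤ) + 1 := ⟨(b - 1).toNat, by omega⟩
    have hsplit :
        qint (a + 1) = q ^ (-((k : ℤ) + 1)) * qint (a - k) + q ^ (a - k) * qint (k + 1) := by
      rw [← qint_add]; ring_nf
    rw [qbinom_add_one_add_one, qbinom_succ_right, add_sub_cancel_right, hsplit]
    have := qfact_ne_zero k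
    have := qint_ne_zero (show (k : ℤ) + 1 ≠ 0 by omega)
    field_simp
    ring_nf

lemma qbinom_zero_left (b : ℤ) : qbinom 0 b = if b = 0 then 1 else 0 := by
  split_ifs with hb
  · rw [hb, qbinom_zero_right]
  · rcases lt_or_gt_of_ne hb with hb | hb
    · exact qbinom_of_neg 0 hb
    · exact qbinom_natCast_of_lt (m := 0) hb

theorem qbinom_vandermonde (m n : ℕ) (k : ℤ) :
    ∑ j ∈ Finset.range (m + 1),
        q ^ (-((m : ℤ) + n) * j + k * m) * qbinom m j * qbinom n (k - j) =
      qbinom ((m : ℤ) + n) k := by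
  induction n generalizing k with
  | zero =>
    simp only [Nat.cast_zero, add_zero, qbinom_zero_left, sub_eq_zero, mul_ite, mul_one, mul_zero]
    rcases lt_or_ge k 0 with hk | hk
    · rw [qbinom_of_neg _ hk]
      exact Finset.sum_eq_zero fun j _ ↦ if_neg (by omega)
    · obtain ⟨k, rfl⟩ : ∃ k' : ℕ, k = k' := ⟨k.toNat, by omega⟩
      simp only [Nat.cast_inj, Finset.sum_ite_eq, Finset.mem_range]
      split_ifs with hkm
      · simp [mul_comm]
      · exact (qbinom_natCast_of_lt (by omega)).symm
  | succ n ih =>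
    have hterm (j : ℕ) :
        q ^ (-((m : ℤ) + (n + 1 : ℕ)) * j + k * m) * qbinom m j * qbinom (n + 1 : ℕ) (k - j) =
          q ^ (-k) * (q ^ (-((m : ℤ) + n) * j + k * m) * qbinom m j * qbinom n (k - j)) +
            q ^ ((m : ℤ) + n + 1 - k) *
              (q ^ (-((m : ℤ) + n) * j + (k - 1) * m) * qbinom m j * qbinom n (k - 1 - j)) := by
      push_cast
      rw [qbinom_add_one_left, sub_right_comm]
      have hq := q_ne_zero
      simp only [mul_add, add_mul, sub_mul, one_mul, zpow_add₀ hq, zpow_sub₀ hq, zpow_neg,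
        neg_mul, zpow_one]
      field_simp
    simp only [hterm, Finset.sum_add_distrib, ← Finset.mul_sum, ih]
    push_cast
    rw [← add_assoc, qbinom_add_one_left]

/-- The q-binomial identity (A.3) of the paper: for naturals `a, c, k` with `a ≤ c − 1`,
`Σ_{j=0}^{a} q^(−(c+1)j+k(a+1))·qbinom(a,j)·qbinom(c−1−a,k−j)
 + q^(−c+1+2a)·Σ_{j=0}^{a} q^(−(c+1)j+(k−1)(a+1))·qbinom(a,j)·qbinom(c−1−a,k−1−j)
 = qbinom(c,k)`. -/
theorem qbinom_sum_identity (a c k : ℕ) (hac : a + 1 ≤ c) :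
    (∑ j ∈ Finset.range (a + 1),
        q ^ (-((c : ℤ) + 1) * (j : ℤ) + (k : ℤ) * ((a : ℤ) + 1)) *
          qbinom (a : ℤ) (j : ℤ) * qbinom ((c : ℤ) - 1 - (a : ℤ)) ((k : ℤ) - (j : ℤ))) +
      q ^ (-(c : ℤ) + 1 + 2 * (a : ℤ)) *
        ∑ j ∈ Finset.range (a + 1),
          q ^ (-((c : ℤ) + 1) * (j : ℤ) + ((k : ℤ) - 1) * ((a : ℤ) + 1)) *
            qbinom (a : ℤ) (j : ℤ) * qbinom ((c : ℤ) - 1 - (a : ℤ)) ((k : ℤ) - 1 - (j : ℤ)) =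
    qbinom (c : ℤ) (k : ℤ) := by
  obtain ⟨n, hn⟩ : ∃ n : ℕ, (c : ℤ) - 1 - a = n := ⟨c - 1 - a, by omega⟩
  have hc : (c : ℤ) = ((a + 1 : ℕ) : ℤ) + n := by push_cast; omega
  have hterm (j : ℕ) :
      q ^ (-(((a + 1 : ℕ) : ℤ) + n) * j + k * (a + 1 : ℕ)) * qbinom (a + 1 : ℕ) j *
          qbinom n (k - j) =
        q ^ (-((c : ℤ) + 1) * j + k * ((a : ℤ) + 1)) * qbinom a j * qbinom n (k - j) +
          q ^ (-(c : ℤ) + 1 + 2 * a) *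
            (q ^ (-((c : ℤ) + 1) * (j - 1) + (k - 1) * ((a : ℤ) + 1)) *
              qbinom a (j - 1) * qbinom n (k - 1 - (j - 1))) := by
    have hq := q_ne_zero
    rw [hc, sub_sub_sub_cancel_right]
    push_cast
    rw [qbinom_add_one_left]
    simp only [mul_add, add_mul, sub_mul, mul_sub, one_mul, mul_one, zpow_add₀ hq, zpow_sub₀ hq,
      zpow_neg, neg_mul, zpow_one, two_mul]
    field_simp
  rw [hn]
  conv_rhs => rw [hc, ← qbinom_vandermonde]
  rw [Finset.sum_congr rfl fun j _ ↦ hterm j, Finset.sum_add_distrib, ← Finset.mul_sum,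
    Finset.sum_range_succ _ (a + 1), Finset.sum_range_succ' _ (a + 1)]
  -- the boundary terms carry `[a, a+1] = 0` and `[a, -1] = 0`
  simp [qbinom_natCast_of_lt, qbinom_of_neg]
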